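/- arXiv:math/0510009 — 2 statements merged into one kernel-verified Lean document; each statement's English description precedes it below -/
import Mathlib

section
/- Let P(θ) be the 3×3 matrix with entries P¹₁ = cos²θ, P¹₂ = P²₁ = cos θ sin θ, P²₂ = sin²θ, P³₃ = 1 and all other entries zero, and let Q(θ) = I − P(θ). Then for every twice continuously differentiable curve q : ℝ → ℝ³, and all t, P(q₃(t))·q̈(t) + d/dt [ Q(q₃(t))·q̇(t) ] equals the vector with components ( q̈₁ + q̇₃ (q̇₁ sin 2q₃ − q̇₂ cos 2q₃), q̈₂ + q̇₃ (−q̇₁ cos 2q₃ − q̇₂ sin 2q₃), q̈₃ ). -/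
open Real

/-- The nonholonomic covariant acceleration `P(q₃)q̈ + d/dt[Q(q₃)q̇]` of the vertical
coin equals the coordinate expression with the constrained Christoffel symbols
`Γ̄¹₁₃ = −Γ̄²₂₃ = sin 2q₃`, `Γ̄¹₂₃ = Γ̄²₁₃ = −cos 2q₃` (equation (20) and the display
preceding equation (22)). -/
theorem coin_constrained_christoffel
    (P Q : ℝ → Matrix (Fin 3) (Fin 3) ℝ)
    (hP : ∀ θ : ℝ, P θ = !![Real.cos θ ^ 2, Real.cos θ * Real.sin θ, 0;
                            Real.cos θ * Real.sin θ, Real.sin θ ^ 2, 0;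
                            0, 0, 1])
    (hQ : ∀ θ : ℝ, Q θ = 1 - P θ)
    (q : ℝ → Fin 3 → ℝ) (hq : ContDiff ℝ 2 q) :
    ∀ t : ℝ,
      (P (q t 2)).mulVec (deriv (deriv q) t)
        + deriv (fun s => (Q (q s 2)).mulVec (deriv q s)) t
      = ![deriv (deriv q) t 0
            + deriv q t 2 * (deriv q t 0 * Real.sin (2 * q t 2)
                - deriv q t 1 * Real.cos (2 * q t 2)),
          deriv (deriv q) t 1
            + deriv q t 2 * (-(deriv q t 0) * Real.cos (2 * q t 2)
                - deriv q t 1 * Real.sin (2 * q t 2)),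
          deriv (deriv q) t 2] := by
  intro t
  have hdq : Differentiable ℝ q := hq.differentiable (by norm_num)
  have hdv : Differentiable ℝ (deriv q) := by
    have h2 : ContDiff ℝ ((1:ℕ)+1) q := by exact_mod_cast hq
    exact (contDiff_succ_iff_deriv.mp h2).2.2.differentiable (by norm_num)
  have hqc : ∀ i, HasDerivAt (fun s => q s i) (deriv q t i) t :=
    hasDerivAt_pi.mp (hdq t).hasDerivAt
  have hvc : ∀ i, HasDerivAt (fun s => deriv q s i) (deriv (deriv q) t i) t :=
    hasDerivAt_pi.mp (hdv t).hasDerivAt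
  set c := q t 2 with hc
  set w := deriv q t 2 with hw
  set v0 := deriv q t 0 with hv0
  set v1 := deriv q t 1 with hv1
  set a0 := deriv (deriv q) t 0 with ha0
  set a1 := deriv (deriv q) t 1 with ha1
  have hcos : HasDerivAt (fun s => Real.cos (q s 2)) (-Real.sin c * w) t := (hqc 2).cos
  have hsin : HasDerivAt (fun s => Real.sin (q s 2)) (Real.cos c * w) t := (hqc 2).sin
  -- explicit components of Q(q₃)·q̇
  have e0 : (fun s => (Q (q s 2)).mulVec (deriv q s) 0)
      = fun s => (1 - Real.cos (q s 2) ^ 2) * deriv q s 0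
          - Real.cos (q s 2) * Real.sin (q s 2) * deriv q s 1 := by
    funext s
    simp [hQ, hP, Matrix.mulVec, dotProduct, Fin.sum_univ_three,
      Matrix.sub_apply, Matrix.one_apply]
    try ring
  have e1 : (fun s => (Q (q s 2)).mulVec (deriv q s) 1)
      = fun s => -(Real.cos (q s 2) * Real.sin (q s 2)) * deriv q s 0
          + (1 - Real.sin (q s 2) ^ 2) * deriv q s 1 := by
    funext s
    simp [hQ, hP, Matrix.mulVec, dotProduct, Fin.sum_univ_three,
      Matrix.sub_apply, Matrix.one_apply]
    try ring
  have e2 : (fun s => (Q (q s 2)).mulVec (deriv q s) 2) = fun _ => (0:ℝ) := by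
    funext s
    simp [hQ, hP, Matrix.mulVec, dotProduct, Fin.sum_univ_three,
      Matrix.sub_apply, Matrix.one_apply]
  have h0 : HasDerivAt (fun s => (Q (q s 2)).mulVec (deriv q s) 0)
      (w * (v0 * Real.sin (2 * c) - v1 * Real.cos (2 * c))
        + (1 - Real.cos c ^ 2) * a0 - Real.cos c * Real.sin c * a1) t := by
    rw [e0]
    have h := (((hasDerivAt_const t (1:ℝ)).sub (hcos.pow 2)).mul (hvc 0)).sub
      ((hcos.mul hsin).mul (hvc 1))
    refine h.congr_deriv ?_
    symm
    simp only [Pi.sub_apply, Pi.mul_apply, Pi.pow_apply, Pi.neg_apply]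
    rw [Real.sin_two_mul, Real.cos_two_mul]
    have hpy := Real.sin_sq_add_cos_sq c
    push_cast
    linear_combination (-(w * deriv q t 1)) * hpy
  have h1 : HasDerivAt (fun s => (Q (q s 2)).mulVec (deriv q s) 1)
      (w * (-v0 * Real.cos (2 * c) - v1 * Real.sin (2 * c))
        - Real.cos c * Real.sin c * a0 + (1 - Real.sin c ^ 2) * a1) t := by
    rw [e1]
    have h := ((hcos.mul hsin).neg.mul (hvc 0)).add
      (((hasDerivAt_const t (1:ℝ)).sub (hsin.pow 2)).mul (hvc 1))
    refine h.congr_deriv ?_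
    symm
    simp only [Pi.sub_apply, Pi.mul_apply, Pi.pow_apply, Pi.neg_apply]
    rw [Real.sin_two_mul, Real.cos_two_mul]
    have hpy := Real.sin_sq_add_cos_sq c
    push_cast
    linear_combination (-(w * deriv q t 0)) * hpy
  have h2 : HasDerivAt (fun s => (Q (q s 2)).mulVec (deriv q s) 2) (0:ℝ) t := by
    rw [e2]; exact hasDerivAt_const t 0
  have hf : HasDerivAt (fun s => (Q (q s 2)).mulVec (deriv q s))
      (![w * (v0 * Real.sin (2 * c) - v1 * Real.cos (2 * c))
            + (1 - Real.cos c ^ 2) * a0 - Real.cos c * Real.sin c * a1,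
          w * (-v0 * Real.cos (2 * c) - v1 * Real.sin (2 * c))
            - Real.cos c * Real.sin c * a0 + (1 - Real.sin c ^ 2) * a1,
          0]) t := by
    apply hasDerivAt_pi.mpr
    intro i
    fin_cases i
    · exact h0
    · exact h1
    · exact h2
  rw [hf.deriv]
  funext i
  fin_cases i <;>
    simp [hP, Matrix.mulVec, dotProduct, Fin.sum_univ_three,
      ← hc, ← hw, ← hv0, ← hv1, ← ha0, ← ha1] <;>
    ring
end

section
/- Let m > 0, J > 0. Let q₃, v₁, v₂, v₃, μ², μ³, η², η³, u₁, u₂ : ℝ → ℝ be differentiable functions such that v₃ = q̇₃, the knife-edge constraint sin q₃ · v₁ = cos q₃ · v₂ holds, and the affine-connection necessary conditions hold: u₁ = m η², u₂ = J η³, μ̇² = 0, μ̇³ = 0, η̇² = −μ², η̇³ = −μ³. Define μ̄¹ = μ² cos q₃, μ̄² = μ² sin q₃, μ̄³ = μ³, η̄¹ = η² cos q₃, η̄² = η² sin q₃, η̄³ = η³. Then the classical necessary conditions hold for all t: u₁ = m(η̄¹ cos q₃ + η̄² sin q₃), u₂ = J η̄³, and the barred multipliers satisfy η̄̇¹ =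 −μ̄¹ − η̄² v₃, η̄̇² = −μ̄² + η̄¹ v₃, η̄̇³ = −μ̄³ + η̄¹ v₂ − η̄² v₁, together with μ̄̇³ = (1/2) sin(2q₃) ((η̄¹)² − (η̄²)²) − η̄¹ η̄² cos(2q₃). [Note: the equations μ̄̇¹ = −μ² sin q₃ · q̇₃ and μ̄̇² = μ² cos q₃ · q̇₃ follow directly from the definitions and μ̇² = 0.] -/
/-!
Once the barred multipliers are substituted away, the control equations reduce to
`cos² + sin² = 1`, the `η̄¹, η̄²` equations to the product rule for `η² cos q₃`, `η² sin q₃`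
with `η̇² = -μ²`, the `η̄³` equation to the knife-edge constraint, and the `μ̄³` equation to
the double-angle formulas, both of its sides vanishing since `μ̇³ = 0`.
-/

open Real

section Rotation

variable {f q : ℝ → ℝ} {t : ℝ}

theorem hasDerivAt_mul_cos_comp (hf : DifferentiableAt ℝ f t) (hq : DifferentiableAt ℝ q t) :
    HasDerivAt (fun s => f s * cos (q s))
      (deriv f t * cos (q t) - f t * sin (q t) * deriv q t) t :=
  (hf.hasDerivAt.fun_mul hq.hasDerivAt.cos).congr_deriv (by ring)

theorem hasDerivAt_mul_sin_comp (hf : DifferentiableAt ℝ f t) (hq : DifferentiableAt ℝ q t) :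
    HasDerivAt (fun s => f s * sin (q s))
      (deriv f t * sin (q t) + f t * cos (q t) * deriv q t) t :=
  (hf.hasDerivAt.fun_mul hq.hasDerivAt.sin).congr_deriv (by ring)

end Rotation

theorem half_sin_two_mul_mul_polar_sq_sub_sq (a θ : ℝ) :
    1 / 2 * sin (2 * θ) * ((a * cos θ) ^ 2 - (a * sin θ) ^ 2)
      = a * cos θ * (a * sin θ) * cos (2 * θ) := by
  rw [sin_two_mul, cos_two_mul']
  ring

theorem coin_classical_verification_general
    (m J : ℝ)
    (q₃ v₁ v₂ v₃ μ₂ μ₃ η₂ η₃ u₁ u₂ : ℝ → ℝ)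
    (hq₃ : Differentiable ℝ q₃)
    (hη₂ : Differentiable ℝ η₂)
    (hv₃ : ∀ t : ℝ, v₃ t = deriv q₃ t)
    (hcon : ∀ t : ℝ, Real.sin (q₃ t) * v₁ t = Real.cos (q₃ t) * v₂ t)
    (hu₁ : ∀ t : ℝ, u₁ t = m * η₂ t)
    (hu₂ : ∀ t : ℝ, u₂ t = J * η₃ t)
    (hμ₃' : ∀ t : ℝ, deriv μ₃ t = 0)
    (hη₂' : ∀ t : ℝ, deriv η₂ t = -(μ₂ t))
    (hη₃' : ∀ t : ℝ, deriv η₃ t = -(μ₃ t))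
    (μb₁ μb₂ μb₃ ηb₁ ηb₂ ηb₃ : ℝ → ℝ)
    (hμb₁ : ∀ t : ℝ, μb₁ t = μ₂ t * Real.cos (q₃ t))
    (hμb₂ : ∀ t : ℝ, μb₂ t = μ₂ t * Real.sin (q₃ t))
    (hμb₃ : ∀ t : ℝ, μb₃ t = μ₃ t)
    (hηb₁ : ∀ t : ℝ, ηb₁ t = η₂ t * Real.cos (q₃ t))
    (hηb₂ : ∀ t : ℝ, ηb₂ t = η₂ t * Real.sin (q₃ t))
    (hηb₃ : ∀ t : ℝ, ηb₃ t = η₃ t) :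
    ∀ t : ℝ,
      u₁ t = m * (ηb₁ t * Real.cos (q₃ t) + ηb₂ t * Real.sin (q₃ t))
      ∧ u₂ t = J * ηb₃ t
      ∧ deriv ηb₁ t = -(μb₁ t) - ηb₂ t * v₃ t
      ∧ deriv ηb₂ t = -(μb₂ t) + ηb₁ t * v₃ t
      ∧ deriv ηb₃ t = -(μb₃ t) + ηb₁ t * v₂ t - ηb₂ t * v₁ t
      ∧ deriv μb₃ t = (1 / 2) * Real.sin (2 * q₃ t) * ((ηb₁ t) ^ 2 - (ηb₂ t) ^ 2)
          - ηb₁ t * ηb₂ t * Real.cos (2 * q₃ t) := by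
  obtain rfl : μb₁ = _ := funext hμb₁
  obtain rfl : μb₂ = _ := funext hμb₂
  obtain rfl : μb₃ = _ := funext hμb₃
  obtain rfl : ηb₁ = _ := funext hηb₁
  obtain rfl : ηb₂ = _ := funext hηb₂
  obtain rfl : ηb₃ = _ := funext hηb₃
  intro t
  refine ⟨?_, hu₂ t, ?_, ?_, ?_, ?_⟩
  · rw [hu₁]
    linear_combination (-(m * η₂ t)) * sin_sq_add_cos_sq (q₃ t)
  · rw [(hasDerivAt_mul_cos_comp (hη₂ t) (hq₃ t)).deriv, hη₂', hv₃]
    ring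
  · rw [(hasDerivAt_mul_sin_comp (hη₂ t) (hq₃ t)).deriv, hη₂', hv₃]
    ring
  · rw [hη₃']
    linear_combination η₂ t * hcon t
  · rw [hμ₃', half_sin_two_mul_mul_polar_sq_sub_sq, sub_self]

/-- Verification that the affine-connection necessary conditions (24), (26), (27)
imply, under the substitution `μ̄¹ = μ² cos q₃`, `μ̄² = μ² sin q₃`, `μ̄³ = μ³`,
`η̄¹ = η² cos q₃`, `η̄² = η² sin q₃`, `η̄³ = η³`, the classical coordinate necessary
conditions (28) for the vertical coin. -/
theorem coin_classical_verification
    (m J : ℝ) (hm : 0 < m) (hJ : 0 < J)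
    (q₃ v₁ v₂ v₃ μ₂ μ₃ η₂ η₃ u₁ u₂ : ℝ → ℝ)
    (hq₃ : Differentiable ℝ q₃)
    (hμ₂ : Differentiable ℝ μ₂) (hμ₃ : Differentiable ℝ μ₃)
    (hη₂ : Differentiable ℝ η₂) (hη₃ : Differentiable ℝ η₃)
    (hv₃ : ∀ t : ℝ, v₃ t = deriv q₃ t)
    (hcon : ∀ t : ℝ, Real.sin (q₃ t) * v₁ t = Real.cos (q₃ t) * v₂ t)
    (hu₁ : ∀ t : ℝ, u₁ t = m * η₂ t)
    (hu₂ : ∀ t : ℝ, u₂ t = J * η₃ t)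
    (hμ₂' : ∀ t : ℝ, deriv μ₂ t = 0)
    (hμ₃' : ∀ t : ℝ, deriv μ₃ t = 0)
    (hη₂' : ∀ t : ℝ, deriv η₂ t = -(μ₂ t))
    (hη₃' : ∀ t : ℝ, deriv η₃ t = -(μ₃ t))
    (μb₁ μb₂ μb₃ ηb₁ ηb₂ ηb₃ : ℝ → ℝ)
    (hμb₁ : ∀ t : ℝ, μb₁ t = μ₂ t * Real.cos (q₃ t))
    (hμb₂ : ∀ t : ℝ, μb₂ t = μ₂ t * Real.sin (q₃ t))
    (hμb₃ : ∀ t : ℝ, μb₃ t = μ₃ t)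
    (hηb₁ : ∀ t : ℝ, ηb₁ t = η₂ t * Real.cos (q₃ t))
    (hηb₂ : ∀ t : ℝ, ηb₂ t = η₂ t * Real.sin (q₃ t))
    (hηb₃ : ∀ t : ℝ, ηb₃ t = η₃ t) :
    ∀ t : ℝ,
      u₁ t = m * (ηb₁ t * Real.cos (q₃ t) + ηb₂ t * Real.sin (q₃ t))
      ∧ u₂ t = J * ηb₃ t
      ∧ deriv ηb₁ t = -(μb₁ t) - ηb₂ t * v₃ t
      ∧ deriv ηb₂ t = -(μb₂ t) + ηb₁ t * v₃ t
      ∧ deriv ηb₃ t = -(μb₃ t) + ηb₁ t * v₂ t - ηb₂ t * v₁ t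
      ∧ deriv μb₃ t = (1 / 2) * Real.sin (2 * q₃ t) * ((ηb₁ t) ^ 2 - (ηb₂ t) ^ 2)
          - ηb₁ t * ηb₂ t * Real.cos (2 * q₃ t) :=
  coin_classical_verification_general m J q₃ v₁ v₂ v₃ μ₂ μ₃ η₂ η₃ u₁ u₂ hq₃ hη₂ hv₃ hcon hu₁ hu₂
    hμ₃' hη₂' hη₃' μb₁ μb₂ μb₃ ηb₁ ηb₂ ηb₃ hμb₁ hμb₂ hμb₃ hηb₁ hηb₂ hηb₃
end
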